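/- arXiv:1410.1619 — 3 statements merged into one kernel-verified Lean document; each statement's English description precedes it below -/
import Mathlib

section
/- Let H be a Hilbert space and U a standard operator algebra on H (a subalgebra of B(H) containing all finite-rank operators). Then every local derivation Δ : U → U is a spatial derivation: there exists a ∈ B(H) such that Δ(x) = ax − xa for all x ∈ U. -/
/-!
Abstract framework for the algebra `S = S(M,τ)` of τ-measurable operators affiliated
with a semi-finite von Neumann algebra `M` with faithful normal semi-finite trace `τ`.
`P` plays the role of the (complete) lattice of projections of `M`, `e : P → S` is the
inclusion of projections into `S`, `trace` is the trace on projections, `opNorm` is the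
operator norm (with value `∞` exactly off `M`, so that `M = {x | opNorm x < ∞}`),
`absOp` is the absolute value `x ↦ |x|`, `equiv` is Murray–von Neumann equivalence of
projections, `traceS` is the extension of the trace to positive operators, `absPow x p`
is `|x| ^ p` for real `p`, and `oc` is the orthocomplement `p ↦ 1 - p`.
-/

open scoped ENNReal

structure MeasurableOperatorFrame (S P : Type*) [Ring S] [StarRing S]
    [Algebra ℂ S] [PartialOrder S] [CompleteLattice P] where
  e : P → S
  e_mono : Monotone e
  e_inj : Function.Injective e
  e_bot : e ⊥ = 0
  e_top : e ⊤ = 1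
  e_idem : ∀ p, e p * e p = e p
  e_sa : ∀ p, star (e p) = e p
  e_mul_of_le : ∀ p q, p ≤ q → e p * e q = e p ∧ e q * e p = e p
  trace : P → ℝ≥0∞
  trace_mono : Monotone trace
  trace_bot : trace ⊥ = 0
  trace_sup_le : ∀ p q, trace (p ⊔ q) ≤ trace p + trace q
  trace_faithful : ∀ p, trace p = 0 → p = ⊥
  semifinite : sSup {p | trace p < ⊤} = ⊤
  finite_directed : DirectedOn (· ≤ ·) {p | trace p < ⊤}
  normal : ∀ (x : S) (Q : Set P), DirectedOn (· ≤ ·) Q →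
      (∀ p ∈ Q, x * e p = 0) → x * e (sSup Q) = 0
  r_spec : ∀ x : S, x * e (sInf {p | x * e p = x}) = x
  l_spec : ∀ x : S, e (sInf {p | e p * x = x}) * x = x
  trace_l_eq_r : ∀ x : S,
      trace (sInf {p | e p * x = x}) = trace (sInf {p | x * e p = x})
  absOp : S → S
  opNorm : S → ℝ≥0∞
  equiv : P → P → Prop
  traceS : S → ℝ≥0∞
  absPow : S → ℝ → S
  oc : P → P
  oc_e : ∀ p, e (oc p) = 1 - e p

namespace MeasurableOperatorFrame

variable {S P : Type*} [Ring S] [StarRing S] [Algebra ℂ S] [PartialOrder S]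
  [CompleteLattice P] (F : MeasurableOperatorFrame S P)

/-- The right support `r(x)` of `x ∈ S(M,τ)`. -/
def rsupp (x : S) : P := sInf {p | x * F.e p = x}

/-- The left support `l(x)` of `x ∈ S(M,τ)`. -/
def lsupp (x : S) : P := sInf {p | F.e p * x = x}

/-- The support `s(x) = l(x) ⊔ r(x)` of `x ∈ S(M,τ)`. -/
def supp (x : S) : P := F.lsupp x ⊔ F.rsupp x

/-- A projection `z` is central if (the image of) `z` commutes with everything. -/
def IsCentral (z : P) : Prop := ∀ x : S, F.e z * x = x * F.e z

/-- The von Neumann algebra `M = {x | opNorm x < ∞}` is abelian. -/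
def Abelian : Prop := ∀ x y : S, F.opNorm x < ⊤ → F.opNorm y < ⊤ → x * y = y * x

/-- `M` has no abelian direct summands: no nonzero central projection `z` has
commutative corner `z M z`. -/
def NoAbelianSummand : Prop := ∀ z : P, z ≠ ⊥ → F.IsCentral z →
    ¬ ∀ x y : S, F.opNorm x < ⊤ → F.opNorm y < ⊤ →
      (F.e z * x * F.e z) * (F.e z * y * F.e z) = (F.e z * y * F.e z) * (F.e z * x * F.e z)

/-- `M` is properly infinite: every nonzero central projection is infinite. -/
def ProperlyInfinite : Prop := ∀ z : P, z ≠ ⊥ → F.IsCentral z →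
    ∃ q : P, q ≤ z ∧ q ≠ z ∧ F.equiv q z

/-- The set `S₀(M,τ)` of τ-compact operators. -/
def tauCompact : Set S := {x | ∀ ε : ℝ, 0 < ε →
    ∃ p : P, F.trace (F.oc p) < ⊤ ∧ F.opNorm (x * F.e p) < ENNReal.ofReal ε}

/-- The Arens algebra `L^ω(M,τ) = ⋂_{p ≥ 1} L^p(M,τ)`. -/
def arens : Set S := {x | ∀ p : ℝ, 1 ≤ p → F.traceS (F.absPow x p) < ⊤}

/-- `L^ω₂(M,τ) = ⋂_{p ≥ 2} L^p(M,τ)`. -/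
def arens2 : Set S := {x | ∀ p : ℝ, 2 ≤ p → F.traceS (F.absPow x p) < ⊤}

end MeasurableOperatorFrame

/-- A derivation: a linear map satisfying the Leibniz rule. -/
def IsDerivation {R A : Type*} [CommSemiring R] [NonUnitalNonAssocRing A] [Module R A]
    (D : A →ₗ[R] A) : Prop := ∀ x y : A, D (x * y) = D x * y + x * D y

/-- A local derivation: a linear map agreeing at each point with some derivation. -/
def IsLocalDerivation {R A : Type*} [CommSemiring R] [NonUnitalNonAssocRing A] [Module R A]
    (Δ : A →ₗ[R] A) : Prop := ∀ x : A, ∃ D : A →ₗ[R] A, IsDerivation D ∧ Δ x = D x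

/-!
Write `θ ζ η` for the rank-one operator `ω ↦ ⟪ζ, ω⟫ • η`, and fix a unit vector `ε`. A derivation
`D` of `U` is the commutator `⁅b, ·⁆` with the linear, a priori unbounded, map
`b η := D (θ ε η) ε`. Hence, with `c η := Δ (θ ε η) ε`, the map `E := Δ - ⁅c, ·⁆` is pointwise
such a commutator: `E x = ⁅b_x, x⁆`.

Such an `E` vanishes on `θ ζ η` for all `η` as soon as, for every `η`, some value
`E (θ ζ η) ω₀` with `⟪ζ, ω₀⟫ ≠ 0` lies in `𝕜 η`: then all values of `E (θ ζ η)` lie in `𝕜 η` and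
`E (θ ζ η) η = 0`, so for fixed `ω` the linear map `η ↦ E (θ ζ η) ω` is a homothety vanishing at
`ω`. The choice of `c` gives the hypothesis for `ζ = ε`, and then, shifting `ζ` by multiples of
`ε`, for every `ζ`.

An `E` vanishing on rank-one operators vanishes: given `y` and `ω`, subtracting two rank-one operators from `y` gives `z` with `z ω = 0` and range orthogonal to
`v := E y ω`, so `v = E z ω = - z (b_z ω)` is orthogonal to itself.

Finally `c` is bounded by the closed graph theorem, because `⟪ζ, c v⟫` is, up to a bounded term,
`⟪ε, Δ (θ ζ ε) v⟫`.
-/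

open InnerProductSpace
open scoped InnerProductSpace

theorem LinearMap.eq_zero_of_apply_mem_span_singleton {K V : Type*} [Field K] [AddCommGroup V]
    [Module K V] {T : V →ₗ[K] V} (hT : ∀ x, T x ∈ K ∙ x) {v : V} (hv : v ≠ 0)
    (hTv : T v = 0) : T = 0 := by
  obtain ⟨a, rfl⟩ := T.exists_eq_smul_id_of_forall_notLinearIndependent fun x hx => by
    obtain ⟨s, hs⟩ := Submodule.mem_span_singleton.mp (hT x)
    simpa using (LinearIndependent.pair_iff.mp hx s (-1) (by rw [← hs]; simp)).2
  obtain rfl : a = 0 := by simpa [hv] using hTv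
  exact zero_smul K _

theorem LinearMap.continuous_of_continuous_inner {𝕜 E F : Type*} [RCLike 𝕜]
    [NormedAddCommGroup E] [NormedSpace 𝕜 E] [CompleteSpace E]
    [NormedAddCommGroup F] [InnerProductSpace 𝕜 F] [CompleteSpace F] (T : E →ₗ[𝕜] F)
    (hT : ∀ y, Continuous fun x => ⟪y, T x⟫_𝕜) : Continuous T :=
  T.continuous_of_seq_closed_graph fun _ x _ hu hTu => ext_inner_left 𝕜 fun z =>
    tendsto_nhds_unique (tendsto_const_nhds.inner hTu) (((hT z).tendsto x).comp hu)

section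

variable {𝕜 H : Type*} [RCLike 𝕜] [NormedAddCommGroup H] [InnerProductSpace 𝕜 H]

theorem finiteDimensional_range_rankOne (η ζ : H) :
    FiniteDimensional 𝕜 (LinearMap.range (rankOne 𝕜 η ζ : H →ₗ[𝕜] H)) := by
  refine Submodule.finiteDimensional_of_le (S₂ := 𝕜 ∙ η) ?_
  rintro - ⟨ω, rfl⟩
  exact Submodule.smul_mem _ _ (Submodule.mem_span_singleton_self η)

theorem lie_rankOne_apply (b : Module.End 𝕜 H) (η ζ ω : H) :
    ⁅b, (rankOne 𝕜 η ζ : Module.End 𝕜 H)⁆ ω = ⟪ζ, ω⟫_𝕜 • b η - ⟪ζ, b ω⟫_𝕜 • η := by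
  simp [Ring.lie_def]

theorem continuous_of_continuous_lie_rankOne [CompleteSpace H] {c : Module.End 𝕜 H} {ε : H}
    (hε : ‖ε‖ = 1)
    (hc : ∀ ζ : H, Continuous ⇑(⁅c, (rankOne 𝕜 ε ζ : Module.End 𝕜 H)⁆ : Module.End 𝕜 H)) :
    Continuous c := by
  refine c.continuous_of_continuous_inner fun ζ => ?_
  have hinner : ∀ v, ⟪ζ, c v⟫_𝕜
      = ⟪ζ, v⟫_𝕜 * ⟪ε, c ε⟫_𝕜 - ⟪ε, ⁅c, (rankOne 𝕜 ε ζ : Module.End 𝕜 H)⁆ v⟫_𝕜 := by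
    intro v
    rw [lie_rankOne_apply, inner_sub_right, inner_smul_right, inner_smul_right,
      inner_self_eq_one_of_norm_eq_one hε]
    ring
  simp_rw [hinner]
  exact ((continuous_const.inner continuous_id).mul continuous_const).sub
    (continuous_const.inner (hc ζ))

variable {U : NonUnitalSubalgebra 𝕜 (H →L[𝕜] H)}

variable (U) in
def NonUnitalSubalgebra.toEndₗ : U →ₗ[𝕜] Module.End 𝕜 H :=
  (ContinuousLinearMap.coeLM 𝕜).comp U.toSubmodule.subtype

@[simp]
theorem NonUnitalSubalgebra.toEndₗ_apply (x : U) (ω : H) :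
    U.toEndₗ x ω = (x : H →L[𝕜] H) ω := rfl

noncomputable def rankOneU (hU : ∀ η ζ : H, rankOne 𝕜 η ζ ∈ U) (ζ : H) : H →ₗ[𝕜] U where
  toFun η := ⟨rankOne 𝕜 η ζ, hU η ζ⟩
  map_add' _ _ := Subtype.ext <| by simp
  map_smul' _ _ := Subtype.ext <| by simp

section

variable (hU : ∀ η ζ : H, rankOne 𝕜 η ζ ∈ U)

@[simp]
theorem coe_rankOneU (ζ η : H) : (rankOneU hU ζ η : H →L[𝕜] H) = rankOne 𝕜 η ζ := rfl

theorem rankOneU_add_left (ζ ζ' η : H) :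
    rankOneU hU (ζ + ζ') η = rankOneU hU ζ η + rankOneU hU ζ' η :=
  Subtype.ext <| by simp

theorem rankOneU_smul_left (s : 𝕜) (ζ η : H) :
    rankOneU hU (s • ζ) η = starRingEnd 𝕜 s • rankOneU hU ζ η :=
  Subtype.ext <| by simp

noncomputable def evalRankOne (Φ : U →ₗ[𝕜] Module.End 𝕜 H) (ε : H) : Module.End 𝕜 H :=
  LinearMap.applyₗ ε ∘ₗ Φ ∘ₗ rankOneU hU ε

theorem evalRankOne_apply (Φ : U →ₗ[𝕜] Module.End 𝕜 H) (ε η : H) :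
    evalRankOne hU Φ ε η = Φ (rankOneU hU ε η) ε := rfl

end

def IsLocallyInner (E : U →ₗ[𝕜] Module.End 𝕜 H) : Prop :=
  ∀ x : U, ∃ b : Module.End 𝕜 H, E x = ⁅b, U.toEndₗ x⁆

theorem isLocallyInner_commutator (c : Module.End 𝕜 H) :
    IsLocallyInner ((LinearMap.mulLeft 𝕜 c - LinearMap.mulRight 𝕜 c) ∘ₗ U.toEndₗ) :=
  fun x => ⟨c, by simp [Ring.lie_def]⟩

theorem IsLocallyInner.sub {E F : U →ₗ[𝕜] Module.End 𝕜 H} (hE : IsLocallyInner E)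
    (hF : IsLocallyInner F) : IsLocallyInner (E - F) := fun x => by
  obtain ⟨b, hb⟩ := hE x
  obtain ⟨b', hb'⟩ := hF x
  exact ⟨b - b', by rw [LinearMap.sub_apply, hb, hb']; simp only [Ring.lie_def]; noncomm_ring⟩

theorem IsDerivation.toEndₗ_eq_lie (hU : ∀ η ζ : H, rankOne 𝕜 η ζ ∈ U) {D : U →ₗ[𝕜] U}
    (hD : IsDerivation D) {ε : H} (hε : ‖ε‖ = 1) (x : U) :
    U.toEndₗ (D x) = ⁅evalRankOne hU (U.toEndₗ ∘ₗ D) ε, U.toEndₗ x⁆ := by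
  ext ξ
  have hmul : x * rankOneU hU ε ξ = rankOneU hU ε ((x : H →L[𝕜] H) ξ) :=
    Subtype.ext (comp_rankOne _ _ _)
  have h := congr((($(hD x (rankOneU hU ε ξ)) : U) : H →L[𝕜] H) ε)
  rw [hmul] at h
  simp [Ring.lie_def, evalRankOne_apply, h, hε]

theorem IsLocalDerivation.isLocallyInner (hU : ∀ η ζ : H, rankOne 𝕜 η ζ ∈ U) {Δ : U →ₗ[𝕜] U}
    (hΔ : IsLocalDerivation Δ) {ε : H} (hε : ‖ε‖ = 1) : IsLocallyInner (U.toEndₗ ∘ₗ Δ) :=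
  fun x => by
    obtain ⟨D, hD, hx⟩ := hΔ x
    exact ⟨_, by simpa [hx] using hD.toEndₗ_eq_lie hU hε x⟩

namespace IsLocallyInner

variable {E : U →ₗ[𝕜] Module.End 𝕜 H} (hU : ∀ η ζ : H, rankOne 𝕜 η ζ ∈ U)

theorem exists_rankOneU_apply (hE : IsLocallyInner E) (ζ η : H) : ∃ b : Module.End 𝕜 H,
    ∀ ω, E (rankOneU hU ζ η) ω = ⟪ζ, ω⟫_𝕜 • b η - ⟪ζ, b ω⟫_𝕜 • η := by
  obtain ⟨b, hb⟩ := hE (rankOneU hU ζ η)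
  exact ⟨b, fun ω => by rw [hb]; exact lie_rankOne_apply b η ζ ω⟩

theorem rankOneU_apply_mem_span_of_inner_eq_zero (hE : IsLocallyInner E) {ζ ω : H}
    (hζω : ⟪ζ, ω⟫_𝕜 = 0) (η : H) : E (rankOneU hU ζ η) ω ∈ 𝕜 ∙ η := by
  obtain ⟨b, hb⟩ := hE.exists_rankOneU_apply hU ζ η
  rw [hb, hζω, zero_smul, zero_sub]
  exact neg_mem (Submodule.smul_mem _ _ (Submodule.mem_span_singleton_self η))

theorem rankOneU_apply_mem_span_and_apply_self_eq_zero (hE : IsLocallyInner E) {ζ ω₀ η : H}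
    (hζω₀ : ⟪ζ, ω₀⟫_𝕜 ≠ 0) (h : E (rankOneU hU ζ η) ω₀ ∈ 𝕜 ∙ η) :
    (∀ ω, E (rankOneU hU ζ η) ω ∈ 𝕜 ∙ η) ∧ E (rankOneU hU ζ η) η = 0 := by
  have hη : η ∈ 𝕜 ∙ η := Submodule.mem_span_singleton_self η
  obtain ⟨b, hb⟩ := hE.exists_rankOneU_apply hU ζ η
  obtain ⟨t, ht⟩ : ∃ t : 𝕜, t • η = b η := by
    rw [hb, Submodule.sub_mem_iff_left _ (Submodule.smul_mem _ _ hη),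
      Submodule.smul_mem_iff _ hζω₀] at h
    exact Submodule.mem_span_singleton.mp h
  refine ⟨fun ω => ?_, ?_⟩
  · rw [hb, ← ht]
    exact sub_mem (Submodule.smul_mem _ _ (Submodule.smul_mem _ _ hη)) (Submodule.smul_mem _ _ hη)
  · rw [hb, ← ht, inner_smul_right, smul_smul, mul_comm, sub_self]

theorem rankOneU_eq_zero_of_apply_mem_span (hE : IsLocallyInner E) {ζ ω₀ : H}
    (hζω₀ : ⟪ζ, ω₀⟫_𝕜 ≠ 0) (h : ∀ η, E (rankOneU hU ζ η) ω₀ ∈ 𝕜 ∙ η) (η : H) :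
    E (rankOneU hU ζ η) = 0 := by
  have key η := hE.rankOneU_apply_mem_span_and_apply_self_eq_zero hU hζω₀ (h η)
  ext ω
  rcases eq_or_ne ω 0 with rfl | hω
  · simp
  have hT := LinearMap.eq_zero_of_apply_mem_span_singleton
    (T := LinearMap.applyₗ ω ∘ₗ E ∘ₗ rankOneU hU ζ) (fun η => (key η).1 ω) hω (key ω).2
  exact LinearMap.congr_fun hT η

theorem rankOneU_eq_zero (hE : IsLocallyInner E) {ε : H} (hε : ‖ε‖ = 1)
    (h : ∀ η, E (rankOneU hU ε η) ε ∈ 𝕜 ∙ η) (ζ η : H) : E (rankOneU hU ζ η) = 0 := by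
  have hεε : ⟪ε, ε⟫_𝕜 = 1 := inner_self_eq_one_of_norm_eq_one hε
  have hε0 : ∀ η, E (rankOneU hU ε η) = 0 :=
    hE.rankOneU_eq_zero_of_apply_mem_span hU (by rw [hεε]; exact one_ne_zero) h
  set ζ₀ := ζ - ⟪ε, ζ⟫_𝕜 • ε
  have hζ₀ : ⟪ζ₀, ε⟫_𝕜 = 0 := by
    rw [inner_sub_left, inner_smul_left, inner_conj_symm, hεε, mul_one, sub_self]
  -- `ζ₀ + ε` pairs nontrivially with `ε`, while `θ (ζ₀ + ε) η` and `θ ζ₀ η` agree modulo `θ ε η`.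
  have hζ₀ε : ∀ η, E (rankOneU hU (ζ₀ + ε) η) = 0 := by
    refine hE.rankOneU_eq_zero_of_apply_mem_span hU (ω₀ := ε)
      (by rw [inner_add_left, hζ₀, hεε, zero_add]; exact one_ne_zero) fun η => ?_
    rw [rankOneU_add_left, map_add, hε0, add_zero]
    exact hE.rankOneU_apply_mem_span_of_inner_eq_zero hU hζ₀ η
  have hζ : ζ = (ζ₀ + ε) + (⟪ε, ζ⟫_𝕜 - 1) • ε := by simp only [ζ₀]; module
  rw [hζ, rankOneU_add_left, rankOneU_smul_left, map_add, map_smul, hζ₀ε, hε0, smul_zero,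
    add_zero]

theorem eq_zero_of_rankOneU_eq_zero [CompleteSpace H] (hE : IsLocallyInner E)
    (h : ∀ ζ η, E (rankOneU hU ζ η) = 0) : E = 0 := by
  ext y ω
  rw [LinearMap.zero_apply, LinearMap.zero_apply]
  set v := E y ω
  rcases eq_or_ne ω 0 with rfl | hω
  · exact map_zero _
  by_contra hv
  set y₁ : U := y - rankOneU hU ω ((⟪ω, ω⟫_𝕜)⁻¹ • (y : H →L[𝕜] H) ω)
  set z : U := y₁ - rankOneU hU (ContinuousLinearMap.adjoint (y₁ : H →L[𝕜] H) v)
    ((⟪v, v⟫_𝕜)⁻¹ • v)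
  have hz : E z = E y := by simp [z, y₁, h]
  have hzω : (z : H →L[𝕜] H) ω = 0 := by
    have hy₁ : (y₁ : H →L[𝕜] H) ω = 0 := by
      simp only [y₁, NonUnitalSubalgebra.coe_sub, sub_apply, coe_rankOneU, rankOne_apply,
        smul_smul, mul_inv_cancel₀ (inner_self_ne_zero (𝕜 := 𝕜) |>.mpr hω), one_smul, sub_self]
    simp only [z, NonUnitalSubalgebra.coe_sub, sub_apply, coe_rankOneU, rankOne_apply, hy₁,
      ContinuousLinearMap.adjoint_inner_left, inner_zero_right, zero_smul, sub_zero]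
  have hzv : ∀ μ, ⟪v, (z : H →L[𝕜] H) μ⟫_𝕜 = 0 := fun μ => by
    simp only [z, NonUnitalSubalgebra.coe_sub, sub_apply, coe_rankOneU, rankOne_apply,
      ContinuousLinearMap.adjoint_inner_left, inner_sub_right, inner_smul_right,
      inv_mul_cancel₀ (inner_self_ne_zero (𝕜 := 𝕜) |>.mpr hv), mul_one, sub_self]
  obtain ⟨b, hb⟩ := hE z
  apply hv
  rw [← inner_self_eq_zero (𝕜 := 𝕜)]
  calc ⟪v, v⟫_𝕜 = ⟪v, E z ω⟫_𝕜 := by rw [hz]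
    _ = ⟪v, b ((z : H →L[𝕜] H) ω) - (z : H →L[𝕜] H) (b ω)⟫_𝕜 := by
      rw [hb]; simp [Ring.lie_def]
    _ = 0 := by rw [hzω, map_zero, zero_sub, inner_neg_right, hzv, neg_zero]

end IsLocallyInner

theorem IsLocalDerivation.toEndₗ_eq_lie [CompleteSpace H] (hU : ∀ η ζ : H, rankOne 𝕜 η ζ ∈ U)
    {Δ : U →ₗ[𝕜] U} (hΔ : IsLocalDerivation Δ) {ε : H} (hε : ‖ε‖ = 1) (x : U) :
    U.toEndₗ (Δ x) = ⁅evalRankOne hU (U.toEndₗ ∘ₗ Δ) ε, U.toEndₗ x⁆ := by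
  set c := evalRankOne hU (U.toEndₗ ∘ₗ Δ) ε
  set E := U.toEndₗ ∘ₗ Δ - (LinearMap.mulLeft 𝕜 c - LinearMap.mulRight 𝕜 c) ∘ₗ U.toEndₗ
  have hE : IsLocallyInner E := (hΔ.isLocallyInner hU hε).sub (isLocallyInner_commutator c)
  have hEε : ∀ η, E (rankOneU hU ε η) ε ∈ 𝕜 ∙ η := fun η => by
    have : E (rankOneU hU ε η) ε = ⟪ε, c ε⟫_𝕜 • η := by simp [E, c, evalRankOne_apply, hε]
    exact this ▸ Submodule.smul_mem _ _ (Submodule.mem_span_singleton_self η)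
  have hE0 := hE.eq_zero_of_rankOneU_eq_zero hU (hE.rankOneU_eq_zero hU hε hEε)
  simpa [E, sub_eq_zero, Ring.lie_def] using LinearMap.congr_fun hE0 x

end

/-- every local derivation on a standard operator algebra `U ⊆ B(H)`
(a subalgebra of `B(H)` containing all finite-rank operators) is a spatial derivation,
implemented by some `a ∈ B(H)`: `Δ(x) = a x - x a`. -/
theorem standardAlgebra_localDerivation_spatial {H : Type*} [NormedAddCommGroup H]
    [InnerProductSpace ℂ H] [CompleteSpace H]
    (U : NonUnitalSubalgebra ℂ (H →L[ℂ] H))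
    (hU : ∀ f : H →L[ℂ] H,
      FiniteDimensional ℂ (LinearMap.range (f : H →ₗ[ℂ] H)) → f ∈ U)
    (Δ : U →ₗ[ℂ] U) (hΔ : IsLocalDerivation Δ) :
    ∃ a : H →L[ℂ] H, ∀ x : U, ((Δ x : U) : H →L[ℂ] H) = a * x - x * a := by
  rcases subsingleton_or_nontrivial H with _ | _
  · exact ⟨0, fun x => Subsingleton.elim _ _⟩
  obtain ⟨ε, hε⟩ := exists_norm_eq H zero_le_one
  have hθ : ∀ η ζ : H, rankOne ℂ η ζ ∈ U := fun η ζ => hU _ (finiteDimensional_range_rankOne η ζ)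
  have hc := hΔ.toEndₗ_eq_lie hθ hε
  refine ⟨⟨evalRankOne hθ (U.toEndₗ ∘ₗ Δ) ε,
    continuous_of_continuous_lie_rankOne hε fun ζ => ?_⟩, fun x => ?_⟩
  · show Continuous ⇑⁅_, U.toEndₗ (rankOneU hθ ζ ε)⁆
    rw [← hc]
    exact (Δ _ : H →L[ℂ] H).continuous
  · ext ω
    simpa [Ring.lie_def] using LinearMap.congr_fun (hc x) ω
end

section
/- Let A be an algebra, Δ a local derivation on A whose restriction to a two-sided ideal I is a derivation and which maps I into I. Let x ∈ I, y ∈ A, and let p ∈ I be an idempotent with xyp = xy, Δ(xy)p = Δ(xy), Δ(x)y·p = Δ(x)y, and xΔ(y)p = xΔ(y). Then Δ(xy) = Δ(x)y + xΔ(y). -/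
/-!
Abstract framework for the algebra `S = S(M,τ)` of τ-measurable operators affiliated
with a semi-finite von Neumann algebra `M` with faithful normal semi-finite trace `τ`.
`P` plays the role of the (complete) lattice of projections of `M`, `e : P → S` is the
inclusion of projections into `S`, `trace` is the trace on projections, `opNorm` is the
operator norm (with value `∞` exactly off `M`, so that `M = {x | opNorm x < ∞}`),
`absOp` is the absolute value `x ↦ |x|`, `equiv` is Murray–von Neumann equivalence of
projections, `traceS` is the extension of the trace to positive operators, `absPow x p`
is `|x| ^ p` for real `p`, and `oc` is the orthocomplement `p ↦ 1 - p`.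
-/

open scoped ENNReal

/-!
Leibniz on `I` at `(x y, p)` gives `x y Δ(p) = 0`, and at `(y p, p)` it shows that `p` absorbs
`x Δ(y p)` on the right. The part `y - y p` of `y` lies outside `I`, but there `Δ` agrees with a
genuine derivation `D`, and `x D(y - y p) p = -x y (p D(p) p) = 0` because `p D(p) p = 0` for an
idempotent `p`. Hence `x Δ(y) = x Δ(y p)`, and Leibniz on `I` at `(x, y p)` concludes.
-/

section

variable {R A : Type*} [CommSemiring R] [NonUnitalRing A] [Module R A]

theorem IsDerivation.mul_map_mul_eq_zero_of_idempotent {D : A →ₗ[R] A} (hD : IsDerivation D)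
    {p : A} (hp : p * p = p) : p * D p * p = 0 := by
  have h : D p = D p * p + p * D p := by rw [← hD, hp]
  have hdouble : p * D p * p = p * D p * p + p * D p * p :=
    calc p * D p * p = p * (D p * p + p * D p) * p := by rw [← h]
      _ = p * D p * (p * p) + p * p * (D p * p) := by noncomm_ring
      _ = p * D p * p + p * D p * p := by rw [hp, mul_assoc]
  exact left_eq_add.mp hdouble

theorem IsDerivation.mul_map_sub_mul_mul_eq_zero {D : A →ₗ[R] A} (hD : IsDerivation D)
    {p x y : A} (hp : p * p = p) (hxy : x * y * p = x * y) : x * D (y - y * p) * p = 0 :=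
  calc x * D (y - y * p) * p = x * D y * (p - p * p) - x * y * p * (D p * p) := by
        rw [map_sub, hD, hxy]; noncomm_ring
    _ = -(x * y * (p * D p * p)) := by rw [hp, sub_self]; noncomm_ring
    _ = 0 := by rw [hD.mul_map_mul_eq_zero_of_idempotent hp, mul_zero, neg_zero]

theorem IsLocalDerivation.mul_map_mul_eq_of_idempotent {Δ : A →ₗ[R] A}
    (hΔ : IsLocalDerivation Δ) {p x y : A} (hp : p * p = p) (hxy : x * y * p = x * y) :
    x * Δ y * p = x * Δ (y * p) * p := by
  obtain ⟨D, hD, hDΔ⟩ := hΔ (y - y * p)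
  have h : x * Δ (y - y * p) * p = 0 := by rw [hDΔ, hD.mul_map_sub_mul_mul_eq_zero hp hxy]
  rwa [map_sub, mul_sub, sub_mul, sub_eq_zero] at h

end

theorem leibniz_at_of_absorbing_idempotent_general {K A : Type*} [Field K] [Ring A] [Module K A]
    (Δ : A →ₗ[K] A) (hΔ : IsLocalDerivation Δ)
    (I : TwoSidedIdeal A)
    (hLeibI : ∀ a ∈ I, ∀ b ∈ I, Δ (a * b) = Δ a * b + a * Δ b)
    (x y : A) (hx : x ∈ I) (p : A) (hpI : p ∈ I) (hp : p * p = p)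
    (h1 : x * y * p = x * y) (h2 : Δ (x * y) * p = Δ (x * y))
    (h3 : Δ x * y * p = Δ x * y) (h4 : x * Δ y * p = x * Δ y) :
    Δ (x * y) = Δ x * y + x * Δ y := by
  have hyp : y * p ∈ I := I.mul_mem_left _ _ hpI
  have hxyΔp : x * y * Δ p = 0 := by
    have h := hLeibI (x * y) (I.mul_mem_right _ _ hx) p hpI
    rwa [h1, h2, left_eq_add] at h
  have hΔyp : x * Δ (y * p) * p = x * Δ (y * p) := by
    have h := hLeibI (y * p) hyp p hpI
    rw [mul_assoc, hp] at h
    calc x * Δ (y * p) * p = x * Δ (y * p) * p + x * y * p * Δ p := by rw [h1, hxyΔp, add_zero]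
      _ = x * (Δ (y * p) * p + y * p * Δ p) := by noncomm_ring
      _ = x * Δ (y * p) := by rw [← h]
  have hΔy : x * Δ y = x * Δ (y * p) := by
    rw [← h4, hΔ.mul_map_mul_eq_of_idempotent hp h1, hΔyp]
  calc Δ (x * y) = Δ (x * (y * p)) := by rw [← mul_assoc, h1]
    _ = Δ x * y + x * Δ y := by rw [hLeibI x hx _ hyp, ← mul_assoc, h3, hΔy]

/-- let `Δ` be a local derivation on `A` mapping a two-sided ideal `I`
into itself and restricting to a derivation on `I`. If `x ∈ I`, `y ∈ A`, and `p ∈ I` is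
an idempotent absorbing `x y`, `Δ(x y)`, `Δ(x) y` and `x Δ(y)` on the right, then the
Leibniz rule `Δ(x y) = Δ(x) y + x Δ(y)` holds at `(x, y)`. -/
theorem leibniz_at_of_absorbing_idempotent {K A : Type*} [Field K] [Ring A] [Module K A]
    (Δ : A →ₗ[K] A) (hΔ : IsLocalDerivation Δ)
    (I : TwoSidedIdeal A) (hΔI : ∀ a ∈ I, Δ a ∈ I)
    (hLeibI : ∀ a ∈ I, ∀ b ∈ I, Δ (a * b) = Δ a * b + a * Δ b)
    (x y : A) (hx : x ∈ I) (p : A) (hpI : p ∈ I) (hp : p * p = p)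
    (h1 : x * y * p = x * y) (h2 : Δ (x * y) * p = Δ (x * y))
    (h3 : Δ x * y * p = Δ x * y) (h4 : x * Δ y * p = x * Δ y) :
    Δ (x * y) = Δ x * y + x * Δ y :=
  leibniz_at_of_absorbing_idempotent_general Δ hΔ I hLeibI x y hx p hpI hp h1 h2 h3 h4
end

section
/- Let A be an algebra and Δ a linear map on A such that Δ(uv) = Δ(u)v + uΔ(v) whenever at least one of u, v belongs to a two-sided ideal I. Suppose Q is a set of idempotents contained in I such that aq = 0 for all q ∈ Q implies a = 0. Then Δ is a derivation on A. -/
/-!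
Abstract framework for the algebra `S = S(M,τ)` of τ-measurable operators affiliated
with a semi-finite von Neumann algebra `M` with faithful normal semi-finite trace `τ`.
`P` plays the role of the (complete) lattice of projections of `M`, `e : P → S` is the
inclusion of projections into `S`, `trace` is the trace on projections, `opNorm` is the
operator norm (with value `∞` exactly off `M`, so that `M = {x | opNorm x < ∞}`),
`absOp` is the absolute value `x ↦ |x|`, `equiv` is Murray–von Neumann equivalence of
projections, `traceS` is the extension of the trace to positive operators, `absPow x p`
is `|x| ^ p` for real `p`, and `oc` is the orthocomplement `p ↦ 1 - p`.
-/

open scoped ENNReal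

/-! Multiplying the desired identity `Δ(xy) = Δ(x)y + xΔ(y)` on the right by `q ∈ I` puts every
product in the ideal, where the Leibniz rule may be applied: expanding `Δ(x(yq))` in two ways
gives `Δ(xy)q = (Δ(x)y + xΔ(y))q`, and the separating family cancels `q`. -/

theorem leibniz_mul_right_of_mem {A : Type*} [Ring A] {Δ : A → A} {L : Ideal A}
    (hΔ : ∀ u v : A, v ∈ L → Δ (u * v) = Δ u * v + u * Δ v) (x y : A) {q : A} (hq : q ∈ L) :
    Δ (x * y) * q = (Δ x * y + x * Δ y) * q := by
  have hxy_q := hΔ (x * y) q hq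
  have hx_yq := hΔ x (y * q) (L.mul_mem_left y hq)
  have hy_q := hΔ y q hq
  calc Δ (x * y) * q = Δ (x * (y * q)) - x * y * Δ q := by rw [← mul_assoc, hxy_q]; abel
    _ = (Δ x * y + x * Δ y) * q := by rw [hx_yq, hy_q]; noncomm_ring

theorem eq_of_forall_mul_eq_of_separating {A : Type*} [NonUnitalNonAssocRing A] {Q : Set A}
    (hsep : ∀ a : A, (∀ q ∈ Q, a * q = 0) → a = 0) {a b : A} (h : ∀ q ∈ Q, a * q = b * q) :
    a = b :=
  sub_eq_zero.mp <| hsep _ fun q hq ↦ by rw [sub_mul, h q hq, sub_self]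

theorem derivation_of_leibniz_on_ideal_general {K A : Type*} [Field K] [Ring A] [Module K A]
    (Δ : A →ₗ[K] A) (I : TwoSidedIdeal A)
    (hLeib : ∀ u v : A, u ∈ I ∨ v ∈ I → Δ (u * v) = Δ u * v + u * Δ v)
    (Q : Set A) (hQI : ∀ q ∈ Q, q ∈ I)
    (hsep : ∀ a : A, (∀ q ∈ Q, a * q = 0) → a = 0) :
    IsDerivation Δ := by
  have hLeib_right : ∀ u v : A, v ∈ I.asIdeal → Δ (u * v) = Δ u * v + u * Δ v :=
    fun u v hv ↦ hLeib u v (Or.inr (TwoSidedIdeal.mem_asIdeal.mp hv))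
  intro x y
  exact eq_of_forall_mul_eq_of_separating hsep fun q hq ↦
    leibniz_mul_right_of_mem hLeib_right x y (TwoSidedIdeal.mem_asIdeal.mpr (hQI q hq))

/-- let `Δ` be a linear map on `A` satisfying the Leibniz rule whenever
at least one of the two factors lies in a two-sided ideal `I`, and let `Q ⊆ I` be a
right-separating family of idempotents (`a q = 0` for all `q ∈ Q` implies `a = 0`).
Then `Δ` is a derivation on all of `A`. -/
theorem derivation_of_leibniz_on_ideal {K A : Type*} [Field K] [Ring A] [Module K A]
    (Δ : A →ₗ[K] A) (I : TwoSidedIdeal A)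
    (hLeib : ∀ u v : A, u ∈ I ∨ v ∈ I → Δ (u * v) = Δ u * v + u * Δ v)
    (Q : Set A) (hQI : ∀ q ∈ Q, q ∈ I) (hidem : ∀ q ∈ Q, q * q = q)
    (hsep : ∀ a : A, (∀ q ∈ Q, a * q = 0) → a = 0) :
    IsDerivation Δ :=
  derivation_of_leibniz_on_ideal_general Δ I hLeib Q hQI hsep
end
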